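/- Let (E_n, T_n) be an admissible inductive system over C*-algebras (C_n) and let n ≥ 1. Then for every y ∈ Z and every tuple (c_0, …, c_{n−1}) with c_k ∈ C_k, the sequence z ∈ L defined by z_k = c_k for k < n and z_k = y_k for k ≥ n belongs to Z. Consequently, the map Φ_n : z ↦ ((z_0, …, z_{n−1}), (z_n, z_{n+1}, …)) is an injective star-algebra homomorphism from Z whose image is exactly the direct sum (C_0 ⊕ ⋯ ⊕ C_{n−1}) ⊕ p_[n,∞)(Z), where p_[n,∞)(Z) = {(y_n, y_{n+1}, …) : y ∈ Z}. -/
import Mathlib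


open Filter ENNReal

noncomputable section

variable {C : ℕ → Type*} [∀ n, NonUnitalNormedRing (C n)] [∀ n, StarRing (C n)]
  [∀ n, CStarRing (C n)] [∀ n, NormedSpace ℂ (C n)] [∀ n, StarModule ℂ (C n)]
  [∀ n, IsScalarTower ℂ (C n) (C n)] [∀ n, SMulCommClass ℂ (C n) (C n)]
  [∀ n, CompleteSpace (C n)]

/-- `ψ : E → D` (with range inside `F ⊆ D`) is an `ε`-morphism: bounded with norm at most
`1 + ε`, approximately multiplicative with defect `ε`, and self-adjoint. -/
def IsEpsMorphism {A D : Type*} [NonUnitalNormedRing A] [StarRing A] [NormedSpace ℂ A]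
    [NonUnitalNormedRing D] [StarRing D] [NormedSpace ℂ D]
    (E : Submodule ℂ A) (F : Submodule ℂ D) (ψ : E →ₗ[ℂ] D) (ε : ℝ) : Prop :=
  (∀ x : E, ψ x ∈ F) ∧
  (∀ x : E, ‖ψ x‖ ≤ (1 + ε) * ‖(x : A)‖) ∧
  (∀ (x y : E) (h : (x : A) * (y : A) ∈ E),
      ‖ψ ⟨(x : A) * (y : A), h⟩ - ψ x * ψ y‖ ≤ ε * ‖(x : A)‖ * ‖(y : A)‖) ∧
  (∀ (x : E) (h : star (x : A) ∈ E), ψ ⟨star (x : A), h⟩ = star (ψ x))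

/-- An admissible inductive system: `E n ⊆ C n` are finite-dimensional self-adjoint subspaces,
`T n : E n → E (n+1)` (the paper's `T_{n+1}`) is an `ε (n+1)`-morphism with
`T n (E n) · T n (E n) ⊆ E (n+1)`, the `ε k` (`k ≥ 1`) are positive with `∑_{k≥1} ε k ≤ 1`. -/
def IsAdmissibleSystem (E : ∀ n, Submodule ℂ (C n)) (T : ∀ n, E n →ₗ[ℂ] E (n + 1))
    (ε : ℕ → ℝ) : Prop :=
  (∀ k, 1 ≤ k → 0 < ε k) ∧
  (∀ N, ∑ k ∈ Finset.Icc 1 N, ε k ≤ 1) ∧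
  (∀ n, FiniteDimensional ℂ (E n)) ∧
  (∀ n, ∀ x ∈ E n, star x ∈ E n) ∧
  (∀ n, IsEpsMorphism (E n) (E (n + 1)) ((E (n + 1)).subtype.comp (T n)) (ε (n + 1))) ∧
  (∀ n, ∀ x y : E n, ((T n x : C (n + 1)) * (T n y : C (n + 1))) ∈ E (n + 1))

/-- The iterated map `Titer E T n x m = T_{[n+m, n+1]}(x) ∈ E (n+m)`
(for `m = 0` this is `x` itself). -/
def Titer (E : ∀ n, Submodule ℂ (C n)) (T : ∀ n, E n →ₗ[ℂ] E (n + 1)) (n : ℕ) (x : E n) :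
    ∀ m : ℕ, E (n + m)
  | 0 => x
  | m + 1 => T (n + m) (Titer E T n x m)

/-- `θₙ(x)`: the sequence `(0, …, 0, x, T_{n+1}x, T_{n+2}T_{n+1}x, …)` (with `x` in
position `n`), as an element of `∀ k, C k`. -/
def theta (E : ∀ n, Submodule ℂ (C n)) (T : ∀ n, E n →ₗ[ℂ] E (n + 1)) (n : ℕ) (x : E n) :
    ∀ k, C k := fun k =>
  if h : n ≤ k then
    cast (congrArg C (Nat.add_sub_cancel' h)) ((Titer E T n x (k - n) : C (n + (k - n))))
  else 0

/-- `Z_n ⊆ L = ℓ∞({C_k})`: the bounded sequences `z` with `z n ∈ E n` and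
`z k = T_{[k,n+1]}(z n)` for all `k > n` (coordinates below `n` are arbitrary). -/
def ZSet (E : ∀ n, Submodule ℂ (C n)) (T : ∀ n, E n →ₗ[ℂ] E (n + 1)) (n : ℕ) :
    Set (lp C ∞) :=
  {z | ∃ h : z n ∈ E n, ∀ k, n ≤ k → z k = theta E T n ⟨z n, h⟩ k}

/-- `Z`: the norm closure of `⋃ n, Z_n` in `L = ℓ∞({C_k})`. -/
def ZAlg (E : ∀ n, Submodule ℂ (C n)) (T : ∀ n, E n →ₗ[ℂ] E (n + 1)) : Set (lp C ∞) :=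
  closure (⋃ n, ZSet E T n)

/-- `c₀({C_k}) ⊆ L`: the sequences whose coordinate norms tend to `0`. -/
def c0Set : Set (lp C ∞) := {z | Tendsto (fun k => ‖z k‖) atTop (nhds 0)}
/-- `p_{[n,∞)}`: the tail map `z ↦ (z_n, z_{n+1}, …)`, from `ℓ∞({C_k})` to
`ℓ∞({C_k : k ≥ n})`. -/
def tailSeq (n : ℕ) (z : lp C ∞) : lp (fun k => C (n + k)) ∞ :=
  ⟨fun k => z (n + k), by
    apply memℓp_infty
    obtain ⟨M, hM⟩ := z.property.bddAbove
    exact ⟨M, by rintro r ⟨k, rfl⟩; exact hM ⟨n + k, rfl⟩⟩⟩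

/-- `Φ_n : z ↦ ((z_0, …, z_{n−1}), (z_n, z_{n+1}, …))`. -/
def PhiMap (n : ℕ) (z : lp C ∞) : (∀ k : Fin n, C k) × lp (fun k => C (n + k)) ∞ :=
  (fun k => z k, tailSeq n z)


set_option linter.unusedSectionVars false in
theorem theta_add (E : ∀ n, Submodule ℂ (C n)) (T : ∀ n, E n →ₗ[ℂ] E (n + 1)) (m j : ℕ)
    (x : E m) : theta E T m x (m + j) = (Titer E T m x j : C (m + j)) := by
  have key : ∀ (a : ℕ) (e : a = j) (h2 : m + a = m + j),
      cast (congrArg C h2) ((Titer E T m x a : C (m + a))) = (Titer E T m x j : C (m + j)) := by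
    rintro a rfl h2; rfl
  simp only [theta]
  rw [dif_pos (Nat.le_add_right m j)]
  exact key _ (Nat.add_sub_cancel_left m j) (Nat.add_sub_cancel' (Nat.le_add_right m j))

set_option linter.unusedSectionVars false in
theorem theta_mem (E : ∀ n, Submodule ℂ (C n)) (T : ∀ n, E n →ₗ[ℂ] E (n + 1)) {m k : ℕ}
    (h : m ≤ k) (x : E m) : theta E T m x k ∈ E k := by
  obtain ⟨j, rfl⟩ := Nat.exists_eq_add_of_le h
  rw [theta_add]; exact (Titer E T m x j).2

set_option linter.unusedSectionVars false in
theorem theta_self (E : ∀ n, Submodule ℂ (C n)) (T : ∀ n, E n →ₗ[ℂ] E (n + 1)) (m : ℕ)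
    (x : E m) : theta E T m x m = x := theta_add E T m 0 x

set_option linter.unusedSectionVars false in
theorem theta_succ (E : ∀ n, Submodule ℂ (C n)) (T : ∀ n, E n →ₗ[ℂ] E (n + 1)) {m k : ℕ}
    (h : m ≤ k) (x : E m) (hmem : theta E T m x k ∈ E k) :
    theta E T m x (k + 1) = (T k ⟨theta E T m x k, hmem⟩ : C (k + 1)) := by
  obtain ⟨j, rfl⟩ := Nat.exists_eq_add_of_le h
  have h2 : (⟨theta E T m x (m + j), hmem⟩ : E (m + j)) = Titer E T m x j :=
    Subtype.ext (theta_add E T m j x)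
  calc theta E T m x (m + j + 1) = (Titer E T m x (j + 1) : C (m + (j + 1))) :=
        theta_add E T m (j + 1) x
    _ = (T (m + j) (Titer E T m x j) : C (m + j + 1)) := rfl
    _ = _ := by rw [← h2]

set_option linter.unusedSectionVars false in
theorem theta_comp (E : ∀ n, Submodule ℂ (C n)) (T : ∀ n, E n →ₗ[ℂ] E (n + 1)) {m n k : ℕ}
    (hmn : m ≤ n) (hnk : n ≤ k) (x : E m) (hmem : theta E T m x n ∈ E n) :
    theta E T m x k = theta E T n ⟨theta E T m x n, hmem⟩ k := by
  induction k, hnk using Nat.le_induction with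
  | base => exact (theta_self E T n ⟨theta E T m x n, hmem⟩).symm
  | succ k hk ih =>
    rw [theta_succ E T (hmn.trans hk) x (theta_mem E T (hmn.trans hk) x),
        theta_succ E T hk _ (theta_mem E T hk _)]
    exact congrArg (fun a : E k => ((T k a : E (k + 1)) : C (k + 1))) (Subtype.ext ih)

set_option linter.unusedSectionVars false in
theorem splice_mem_ZSet (E : ∀ n, Submodule ℂ (C n)) (T : ∀ n, E n →ₗ[ℂ] E (n + 1))
    {m n : ℕ} {w z : lp C ∞} (hw : w ∈ ZSet E T m)
    (hz : ∀ k, n ≤ k → z k = w k) : z ∈ ZSet E T (max m n) := by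
  obtain ⟨hwm, hwk⟩ := hw
  have hmN : m ≤ max m n := le_max_left m n
  have hnN : n ≤ max m n := le_max_right m n
  have hzN : z (max m n) = theta E T m ⟨w m, hwm⟩ (max m n) :=
    (hz _ hnN).trans (hwk _ hmN)
  have hmem : z (max m n) ∈ E (max m n) := hzN ▸ theta_mem E T hmN _
  refine ⟨hmem, fun k hk => ?_⟩
  rw [hz k (hnN.trans hk), hwk k (hmN.trans hk),
      theta_comp E T hmN hk _ (theta_mem E T hmN _)]
  exact congrArg (fun y : E (max m n) => theta E T (max m n) y k) (Subtype.ext hzN.symm)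

/-- For an admissible inductive system and `n ≥ 1`: any bounded sequence
agreeing from coordinate `n` on with an element of `Z` belongs to `Z` (this is the
splicing statement); consequently `Φ_n` is an injective star-algebra homomorphism on `Z`
whose image is exactly `(C_0 ⊕ ⋯ ⊕ C_{n−1}) ⊕ p_{[n,∞)}(Z)`. -/
theorem PhiMap_props (E : ∀ n, Submodule ℂ (C n)) (T : ∀ n, E n →ₗ[ℂ] E (n + 1))
    (ε : ℕ → ℝ) (hsys : IsAdmissibleSystem E T ε) (n : ℕ) (hn : 1 ≤ n) :
    (∀ y ∈ ZAlg E T, ∀ z : lp C ∞, (∀ k, n ≤ k → z k = y k) → z ∈ ZAlg E T) ∧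
    Set.InjOn (PhiMap n) (ZAlg E T) ∧
    (∀ z w : lp C ∞, PhiMap n (z + w) = PhiMap n z + PhiMap n w) ∧
    (∀ (c : ℂ) (z : lp C ∞), PhiMap n (c • z) = c • PhiMap n z) ∧
    (∀ z w : lp C ∞, PhiMap n (z * w) = PhiMap n z * PhiMap n w) ∧
    (∀ z : lp C ∞, PhiMap n (star z) = star (PhiMap n z)) ∧
    PhiMap n '' ZAlg E T = Set.univ ×ˢ (tailSeq n '' ZAlg E T) := by
  classical
  have splice : ∀ y ∈ ZAlg E T, ∀ z : lp C ∞, (∀ k, n ≤ k → z k = y k) → z ∈ ZAlg E T := by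
    intro y hy z hzy
    rw [ZAlg, Metric.mem_closure_iff]
    intro δ hδ
    rw [ZAlg, Metric.mem_closure_iff] at hy
    obtain ⟨w, hwmem, hwy⟩ := hy δ hδ
    obtain ⟨m, hwm⟩ := Set.mem_iUnion.mp hwmem
    have hb : Memℓp (fun k => if n ≤ k then w k else z k) ∞ := by
      apply memℓp_infty
      refine ⟨max ‖w‖ ‖z‖, ?_⟩
      rintro r ⟨k, rfl⟩
      dsimp only
      split
      · exact le_max_of_le_left (lp.norm_apply_le_norm ENNReal.top_ne_zero w k)
      · exact le_max_of_le_right (lp.norm_apply_le_norm ENNReal.top_ne_zero z k)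
    set w' : lp C ∞ := ⟨fun k => if n ≤ k then w k else z k, hb⟩ with hw'def
    have hw'k : ∀ k, n ≤ k → w' k = w k := fun k hk => if_pos hk
    refine ⟨w', Set.mem_iUnion.mpr ⟨max m n, splice_mem_ZSet E T hwm hw'k⟩, ?_⟩
    have hle : dist z w' ≤ dist y w := by
      rw [dist_eq_norm, dist_eq_norm]
      refine lp.norm_le_of_forall_le (norm_nonneg _) fun k => ?_
      rw [lp.coeFn_sub, Pi.sub_apply]
      by_cases hk : n ≤ k
      · rw [hw'k k hk, hzy k hk]
        calc ‖y k - w k‖ = ‖(y - w) k‖ := by rw [lp.coeFn_sub, Pi.sub_apply]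
          _ ≤ ‖y - w‖ := lp.norm_apply_le_norm ENNReal.top_ne_zero _ k
      · have hzk : w' k = z k := if_neg hk
        rw [hzk, sub_self, norm_zero]
        exact norm_nonneg _
    exact hle.trans_lt hwy
  have hinj : Function.Injective (PhiMap (C := C) n) := by
    intro z w h
    have h1 := congrArg Prod.fst h
    have h2 : (fun k => z (n + k)) = fun k => w (n + k) :=
      congrArg (fun p : (∀ k : Fin n, C k) × lp (fun k => C (n + k)) ∞ =>
        (p.2 : ∀ k, C (n + k))) h
    apply Subtype.ext; funext k
    by_cases hk : k < n
    · exact congrFun h1 ⟨k, hk⟩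
    · have hk' : n ≤ k := le_of_not_gt hk
      have h3 : z (n + (k - n)) = w (n + (k - n)) := congrFun h2 (k - n)
      rwa [Nat.add_sub_cancel' hk'] at h3
  refine ⟨splice, fun a _ b _ h => hinj h, ?_, ?_, ?_, ?_, ?_⟩
  · intro z w
    refine Prod.ext (funext fun k => ?_) (Subtype.ext (funext fun k => ?_))
    · show (z + w) (k : ℕ) = z k + w k
      rw [lp.coeFn_add, Pi.add_apply]
    · show (z + w) (n + k) = z (n + k) + w (n + k)
      rw [lp.coeFn_add, Pi.add_apply]
  · intro c z
    refine Prod.ext (funext fun k => ?_) (Subtype.ext (funext fun k => ?_))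
    · show (c • z) (k : ℕ) = c • z k
      rw [lp.coeFn_smul, Pi.smul_apply]
    · show (c • z) (n + k) = c • z (n + k)
      rw [lp.coeFn_smul, Pi.smul_apply]
  · intro z w
    refine Prod.ext (funext fun k => ?_) (Subtype.ext (funext fun k => ?_))
    · show (z * w) (k : ℕ) = z k * w k
      rw [lp.infty_coeFn_mul, Pi.mul_apply]
    · show (z * w) (n + k) = z (n + k) * w (n + k)
      rw [lp.infty_coeFn_mul, Pi.mul_apply]
  · intro z
    refine Prod.ext (funext fun k => ?_) (Subtype.ext (funext fun k => ?_))
    · show (star z) (k : ℕ) = star (z k)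
      rw [lp.coeFn_star, Pi.star_apply]
    · show (star z) (n + k) = star (z (n + k))
      rw [lp.coeFn_star, Pi.star_apply]
  · apply Set.Subset.antisymm
    · rintro _ ⟨z, hz, rfl⟩
      exact ⟨trivial, z, hz, rfl⟩
    · rintro ⟨c, t⟩ ⟨-, y, hy, rfl⟩
      set f : ∀ k, C k := fun k => if h : k < n then (c ⟨k, h⟩ : C k) else y k with hf
      have hb : Memℓp f ∞ := by
        apply memℓp_infty
        obtain ⟨M, hM⟩ := ((Set.finite_Iio n).image fun k => ‖f k‖).bddAbove
        refine ⟨max M ‖y‖, ?_⟩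
        rintro r ⟨k, rfl⟩
        by_cases hk : k < n
        · exact le_max_of_le_left (hM ⟨k, hk, rfl⟩)
        · have hfk : f k = y k := dif_neg hk
          dsimp only
          rw [hfk]
          exact le_max_of_le_right (lp.norm_apply_le_norm ENNReal.top_ne_zero y k)
      set z : lp C ∞ := ⟨f, hb⟩ with hzdef
      have hzy : ∀ k, n ≤ k → z k = y k := fun k hk => dif_neg (not_lt.mpr hk)
      refine ⟨z, splice y hy z hzy, ?_⟩
      refine Prod.ext (funext fun k => ?_) (Subtype.ext (funext fun k => ?_))
      · show (if h : (k : ℕ) < n then (c ⟨k, h⟩ : C k) else y k) = c k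
        rw [dif_pos k.2]
      · exact hzy (n + k) (Nat.le_add_right n k)
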